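/- arXiv:math/0502167 — 5 statements merged into one kernel-verified Lean document; each statement's English description precedes it below -/
import Mathlib

section
/- If a point X of the polytope P lies on the hyperplane σ given by x₁₂+x₂₃+x₃₁+x₁₃+x₃₂+x₂₁ = 1, then X lies on all three hyperplanes α₁, α₂, α₃; that is, all three defining inequalities of P hold with equality at X. Consequently σ does not support a facet of P. -/
/-- The polytope `P ⊂ ℝ⁶` in coordinates `(x₁₂, x₂₃, x₃₁, x₁₃, x₃₂, x₂₁)`,
indexed as `(x 0, x 1, x 2, x 3, x 4, x 5)`. -/
def polyP : Set (Fin 6 → ℝ) :=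
  {x | x 0 + x 3 + 2 * (x 5 + x 2) ≤ 1 ∧
       x 5 + x 1 + 2 * (x 0 + x 4) ≤ 1 ∧
       x 2 + x 4 + 2 * (x 3 + x 1) ≤ 1 ∧
       ∀ i, 0 ≤ x i}

/-- If a point `X ∈ P` lies on the hyperplane `σ : x₁₂+x₂₃+x₃₁+x₁₃+x₃₂+x₂₁ = 1`,
then `X` lies on all three hyperplanes `α₁, α₂, α₃`. -/
theorem polyP_on_sigma_on_all_alphas (x : Fin 6 → ℝ) (hx : x ∈ polyP)
    (hσ : x 0 + x 1 + x 2 + x 3 + x 4 + x 5 = 1) :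
    x 0 + x 3 + 2 * (x 5 + x 2) = 1 ∧
    x 5 + x 1 + 2 * (x 0 + x 4) = 1 ∧
    x 2 + x 4 + 2 * (x 3 + x 1) = 1 := by
  obtain ⟨hα₁, hα₂, hα₃, -⟩ := hx
  -- The three `α`-forms add up to three times the `σ`-form, so at a point of `σ` the three
  -- quantities, each at most `1`, sum to `3`.
  exact ⟨by linarith, by linarith, by linarith⟩
end

section
/- Vol(P₁) = Vol(P₂) = Vol(P₃) = (1/3)·Vol(P), where P_j = conv({O} ∪ (P ∩ α_j)) for j = 1, 2, 3. -/
open MeasureTheory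

/-- The hyperplane `α₁ : x₁₂+x₁₃+2(x₂₁+x₃₁) = 1`. -/
def alpha1 : Set (Fin 6 → ℝ) :=
  {x | x 0 + x 3 + 2 * (x 5 + x 2) = 1}

/-- The hyperplane `α₂ : x₂₁+x₂₃+2(x₁₂+x₃₂) = 1`. -/
def alpha2 : Set (Fin 6 → ℝ) :=
  {x | x 5 + x 1 + 2 * (x 0 + x 4) = 1}

/-- The hyperplane `α₃ : x₃₁+x₃₂+2(x₁₃+x₂₃) = 1`. -/
def alpha3 : Set (Fin 6 → ℝ) :=
  {x | x 2 + x 4 + 2 * (x 3 + x 1) = 1}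

/-- `P₁ = conv({O} ∪ (P ∩ α₁))`. -/
noncomputable def P1 : Set (Fin 6 → ℝ) :=
  convexHull ℝ ({0} ∪ (polyP ∩ alpha1))

/-- `P₂ = conv({O} ∪ (P ∩ α₂))`. -/
noncomputable def P2 : Set (Fin 6 → ℝ) :=
  convexHull ℝ ({0} ∪ (polyP ∩ alpha2))

/-- `P₃ = conv({O} ∪ (P ∩ α₃))`. -/
noncomputable def P3 : Set (Fin 6 → ℝ) :=
  convexHull ℝ ({0} ∪ (polyP ∩ alpha3))

/-!
Write `f₁, f₂, f₃` for the three linear forms bounded by `1` in the definition of `P`. Their sum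
is `3 ∑ x_ij`, so no nonzero point of the orthant has all `f_i ≤ 0`; hence the cone from `O` over
the facet `P ∩ α_j` is exactly the region of `P` where `f_j` is the largest of the `f_i`. These
three regions cover `P` and meet only inside the hyperplanes `f_i = f_j`, which are null. Finally
the relabelling `1 → 2 → 3 → 1` of the indices of `x_ij` is a coordinate permutation, so it
preserves volume, and it permutes the three regions cyclically.
-/

open Set

section DominantRegion

variable {E ι : Type*} [AddCommGroup E] [Module ℝ E] {C : PointedCone ℝ E}
  {φ : ι → E →ₗ[ℝ] ℝ}

variable (C φ) in
def dominantRegion (j : ι) : Set E :=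
  {x | x ∈ C ∧ φ j x ≤ 1 ∧ ∀ i, φ i x ≤ φ j x}

lemma convex_dominantRegion (j : ι) : Convex ℝ (dominantRegion C φ j) := by
  rintro x ⟨hxC, hx1, hx⟩ y ⟨hyC, hy1, hy⟩ a b ha hb hab
  refine ⟨C.convex hxC hyC ha hb hab, ?_, fun i => ?_⟩ <;>
    simp only [map_add, map_smul, smul_eq_mul]
  · nlinarith
  · nlinarith [hx i, hy i]

theorem convexHull_zero_union_facet_eq_dominantRegion
    (hpos : ∀ x ∈ C, (∀ i, φ i x ≤ 0) → x = 0) (j : ι) :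
    convexHull ℝ ({0} ∪ {x | x ∈ C ∧ ∀ i, φ i x ≤ 1} ∩ {x | φ j x = 1}) =
      dominantRegion C φ j := by
  refine (convexHull_min ?_ (convex_dominantRegion j)).antisymm ?_
  · rintro x (rfl | ⟨⟨hxC, hx⟩, hxj⟩)
    · exact ⟨C.zero_mem, by simp, by simp⟩
    · exact ⟨hxC, hxj.le, fun i => hxj ▸ hx i⟩
  · rintro x ⟨hxC, hx1, hx⟩
    rcases le_or_gt (φ j x) 0 with hle | hlt
    · obtain rfl := hpos x hxC fun i => (hx i).trans hle
      exact subset_convexHull ℝ _ (Or.inl rfl)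
    · have hy : (φ j x)⁻¹ • x ∈ {x | x ∈ C ∧ ∀ i, φ i x ≤ 1} ∩ {x | φ j x = 1} := by
        refine ⟨⟨C.smul_mem (inv_nonneg.2 hlt.le) hxC, fun i => ?_⟩, ?_⟩ <;>
          simp only [mem_ofPred_eq, map_smul, smul_eq_mul]
        · exact inv_mul_le_one₀ hlt |>.2 (hx i)
        · exact inv_mul_cancel₀ hlt.ne'
      rw [show x = φ j x • ((φ j x)⁻¹ • x) + (1 - φ j x) • (0 : E) by simp [smul_smul, hlt.ne']]
      refine convex_convexHull ℝ _ ?_ ?_ hlt.le (sub_nonneg.2 hx1) (add_sub_cancel _ _) <;>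
        apply subset_convexHull
      exacts [Or.inr hy, Or.inl rfl]

theorem iUnion_dominantRegion [Finite ι] [Nonempty ι] :
    ⋃ j, dominantRegion C φ j = {x | x ∈ C ∧ ∀ i, φ i x ≤ 1} := by
  ext x
  simp only [mem_iUnion, dominantRegion, mem_ofPred_eq]
  constructor
  · rintro ⟨j, hxC, hj, hx⟩
    exact ⟨hxC, fun i => (hx i).trans hj⟩
  · rintro ⟨hxC, hx⟩
    obtain ⟨j, hj⟩ := Finite.exists_max fun i => φ i x
    exact ⟨j, hxC, hx j, hj⟩

theorem preimage_dominantRegion {T : E → E} {π : ι ≃ ι} (hC : ∀ x, T x ∈ C ↔ x ∈ C)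
    (hT : ∀ i x, φ i (T x) = φ (π i) x) (j : ι) :
    T ⁻¹' dominantRegion C φ j = dominantRegion C φ (π j) := by
  ext x
  simp only [mem_preimage, dominantRegion, mem_ofPred_eq, hC, hT,
    π.forall_congr_right (q := fun i => φ i x ≤ φ (π j) x)]

end DominantRegion

theorem measure_eq_sum_dominantRegion {E ι : Type*} [NormedAddCommGroup E] [NormedSpace ℝ E]
    [MeasurableSpace E] [BorelSpace E] [FiniteDimensional ℝ E] [Fintype ι] [Nonempty ι]
    (μ : Measure E) [μ.IsAddHaarMeasure] (C : PointedCone ℝ E) {φ : ι → E →ₗ[ℝ] ℝ}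
    (hφ : Function.Injective φ) :
    μ {x | x ∈ C ∧ ∀ i, φ i x ≤ 1} = ∑ j, μ (dominantRegion C φ j) := by
  rw [← iUnion_dominantRegion, measure_iUnion₀ ?_
    fun j => (convex_dominantRegion j).nullMeasurableSet μ, tsum_fintype]
  intro i j hij
  refine measure_mono_null (fun x hx => ?_)
    (Measure.addHaar_submodule μ _ (mt LinearMap.eqLocus_eq_top.1 (hφ.ne hij)))
  exact le_antisymm (hx.2.2.2 i) (hx.1.2.2 j)

open LinearMap in
/-- `facetForm j` is the form defining `α_{j+1}`. -/
def facetForm : Fin 3 → (Fin 6 → ℝ) →ₗ[ℝ] ℝ :=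
  let x (k : Fin 6) : (Fin 6 → ℝ) →ₗ[ℝ] ℝ := proj k
  ![x 0 + x 3 + (2 : ℝ) • (x 5 + x 2), x 5 + x 1 + (2 : ℝ) • (x 0 + x 4),
    x 2 + x 4 + (2 : ℝ) • (x 3 + x 1)]

local notation "orthant" => PointedCone.positive ℝ (Fin 6 → ℝ)

lemma polyP_eq : polyP = {x | x ∈ orthant ∧ ∀ i, facetForm i x ≤ 1} := by
  ext x
  refine ⟨fun ⟨h0, h1, h2, hx⟩ => ⟨hx, fun i => ?_⟩, fun ⟨hx, h⟩ => ⟨h 0, h 1, h 2, hx⟩⟩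
  fin_cases i
  exacts [h0, h1, h2]

lemma eq_zero_of_facetForm_nonpos (x : Fin 6 → ℝ) (hx : x ∈ orthant)
    (h : ∀ i, facetForm i x ≤ 0) : x = 0 := by
  replace hx : ∀ k, 0 ≤ x k := hx
  have h0 : x 0 + x 3 + 2 * (x 5 + x 2) ≤ 0 := h 0
  have h1 : x 5 + x 1 + 2 * (x 0 + x 4) ≤ 0 := h 1
  have h2 : x 2 + x 4 + 2 * (x 3 + x 1) ≤ 0 := h 2
  funext k
  fin_cases k <;> simp <;> linarith [hx 0, hx 1, hx 2, hx 3, hx 4, hx 5]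

lemma facetForm_injective : Function.Injective facetForm := by
  intro i j h
  have := LinearMap.congr_fun h (Pi.single 0 1)
  fin_cases i <;> fin_cases j <;> simp [facetForm] at this ⊢

/-- `(x ∘ cycleIndices)_ab = x_τ(a)τ(b)` for the cycle `τ = (1 2 3)` of the indices of `x_ij`. -/
def cycleIndices : Fin 6 ≃ Fin 6 where
  toFun := ![1, 2, 0, 5, 3, 4]
  invFun := ![2, 0, 1, 4, 5, 3]
  left_inv := by decide
  right_inv := by decide

lemma facetForm_comp_cycleIndices (i : Fin 3) (x : Fin 6 → ℝ) :
    facetForm i (x ∘ cycleIndices) = facetForm (Equiv.addRight 1 i) x := by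
  fin_cases i <;> simp [facetForm, cycleIndices] <;> ring

lemma volume_dominantRegion_add_one (j : Fin 3) :
    volume (dominantRegion orthant facetForm j) =
      volume (dominantRegion orthant facetForm (j + 1)) := by
  have hσ := (volume_measurePreserving_piCongrLeft (fun _ : Fin 6 => ℝ) cycleIndices).symm
  rw [← hσ.measure_preimage_equiv]
  refine congrArg volume (preimage_dominantRegion (fun x => ?_) facetForm_comp_cycleIndices j)
  simp only [PointedCone.mem_positive, Pi.le_def]
  exact cycleIndices.forall_congr_right (q := fun k => (0 : ℝ) ≤ x k)

/-- `Vol(P₁) = Vol(P₂) = Vol(P₃) = (1/3)·Vol(P)`. -/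
theorem volume_pieces :
    volume P1 = volume P2 ∧ volume P2 = volume P3 ∧
    volume P1 = (1 / 3) * volume polyP := by
  have hcone (j : Fin 3) :
      convexHull ℝ ({0} ∪ polyP ∩ {x | facetForm j x = 1}) =
        dominantRegion orthant facetForm j :=
    polyP_eq ▸ convexHull_zero_union_facet_eq_dominantRegion eq_zero_of_facetForm_nonpos j
  obtain ⟨h1, h2, h3⟩ : P1 = dominantRegion orthant facetForm 0 ∧
      P2 = dominantRegion orthant facetForm 1 ∧ P3 = dominantRegion orthant facetForm 2 :=
    ⟨hcone 0, hcone 1, hcone 2⟩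
  have h01 : volume P1 = volume P2 := h1 ▸ h2 ▸ volume_dominantRegion_add_one 0
  have h12 : volume P2 = volume P3 := h2 ▸ h3 ▸ volume_dominantRegion_add_one 1
  refine ⟨h01, h12, ?_⟩
  rw [polyP_eq, measure_eq_sum_dominantRegion volume orthant facetForm_injective,
    Fin.sum_univ_three, ← h1, ← h2, ← h3, ← h12, ← h01,
    show volume P1 + volume P1 + volume P1 = 3 * volume P1 by ring, ← mul_assoc, one_div,
    ENNReal.inv_mul_cancel three_ne_zero ENNReal.ofNat_ne_top, one_mul]
end

section
/- The polytope P is the union of the three pieces: P = P₁ ∪ P₂ ∪ P₃, where P_j = conv({O} ∪ (P ∩ α_j)) for j = 1, 2, 3. -/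
open MeasureTheory

/-! For `x ∈ P` let `t` be the largest of the three linear forms defining `α₁, α₂, α₃`, evaluated
at `x`. If `t ≤ 0` then `x = O`, since `x ≥ 0`. Otherwise `0 < t ≤ 1`, the point `t⁻¹ • x` still lies
in `P` and lies on the hyperplane `α_j` where the maximum is attained, and
`x = t • (t⁻¹ • x) + (1 - t) • O ∈ P_j`. Conversely `P_j ⊆ P` because `P` is convex and contains `O`. -/

section
variable {E : Type*} [AddCommGroup E] [Module ℝ E]

theorem convexHull_zero_union_inter_subset {s t : Set E} (hs : Convex ℝ s) (h₀ : (0 : E) ∈ s) :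
    convexHull ℝ ({0} ∪ (s ∩ t)) ⊆ s :=
  convexHull_min (Set.union_subset (Set.singleton_subset_iff.2 h₀) Set.inter_subset_left) hs

theorem mem_convexHull_zero_union_of_inv_smul_mem {s : Set E} {x : E} {t : ℝ}
    (ht₀ : 0 < t) (ht₁ : t ≤ 1) (hx : t⁻¹ • x ∈ s) : x ∈ convexHull ℝ ({0} ∪ s) := by
  have := (convex_convexHull ℝ ({0} ∪ s)).smul_mem_of_zero_mem
    (subset_convexHull ℝ _ (Or.inl rfl)) (subset_convexHull ℝ _ (Or.inr hx)) ⟨ht₀.le, ht₁⟩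
  rwa [smul_inv_smul₀ ht₀.ne'] at this

theorem ConvexCone.exists_mem_convexHull_zero_union_inter_eq_one {ι : Type*} [Finite ι]
    [Nonempty ι] (K : ConvexCone ℝ E) (f : ι → E →ₗ[ℝ] ℝ)
    (hf : ∀ x ∈ K, (∀ i, f i x ≤ 0) → x = 0) {x : E}
    (hx : x ∈ (K : Set E) ∩ ⋂ i, {y | f i y ≤ 1}) :
    ∃ i, x ∈ convexHull ℝ ({0} ∪ ((K : Set E) ∩ (⋂ j, {y | f j y ≤ 1}) ∩ {y | f i y = 1})) := by
  simp only [Set.mem_inter_iff, Set.mem_iInter, Set.mem_ofPred_eq, SetLike.mem_coe] at hx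
  obtain ⟨hxK, hx₁⟩ := hx
  obtain ⟨i, hi⟩ := Finite.exists_max fun i => f i x
  refine ⟨i, ?_⟩
  rcases le_or_gt (f i x) 0 with hnonpos | hpos
  · rw [hf x hxK fun j => (hi j).trans hnonpos]
    exact subset_convexHull ℝ _ (Or.inl rfl)
  refine mem_convexHull_zero_union_of_inv_smul_mem hpos (hx₁ i)
    ⟨⟨K.smul_mem (inv_pos.2 hpos) hxK, ?_⟩, ?_⟩
  · simp only [Set.mem_iInter, Set.mem_ofPred_eq, map_smul, smul_eq_mul]
    exact fun j => inv_mul_le_one_of_le₀ (hi j) hpos.le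
  · simp only [Set.mem_ofPred_eq, map_smul, smul_eq_mul]
    exact inv_mul_cancel₀ hpos.ne'

end

/-- `alphaForm j` is the linear form whose level set `{· = 1}` is `α_{j+1}`. -/
def alphaForm : Fin 3 → (Fin 6 → ℝ) →ₗ[ℝ] ℝ :=
  ![.proj 0 + .proj 3 + (2 : ℝ) • (.proj 5 + .proj 2),
    .proj 5 + .proj 1 + (2 : ℝ) • (.proj 0 + .proj 4),
    .proj 2 + .proj 4 + (2 : ℝ) • (.proj 3 + .proj 1)]

theorem polyP_eq_positive_inter_alphaForm_le_one :
    polyP = (ConvexCone.positive ℝ (Fin 6 → ℝ) : Set (Fin 6 → ℝ)) ∩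
      ⋂ i, {x | alphaForm i x ≤ 1} := by
  ext x
  rw [Set.mem_inter_iff, Set.mem_iInter, Fin.forall_fin_succ, Fin.forall_fin_two]
  exact ⟨fun ⟨h₁, h₂, h₃, h₀⟩ => ⟨h₀, h₁, h₂, h₃⟩, fun ⟨h₀, h₁, h₂, h₃⟩ => ⟨h₁, h₂, h₃, h₀⟩⟩

theorem eq_zero_of_nonneg_of_alphaForm_nonpos {x : Fin 6 → ℝ} (hx : ∀ j, 0 ≤ x j)
    (hf : ∀ i, alphaForm i x ≤ 0) : x = 0 := by
  have h₁ : x 0 + x 3 + 2 * (x 5 + x 2) ≤ 0 := hf 0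
  have h₂ : x 5 + x 1 + 2 * (x 0 + x 4) ≤ 0 := hf 1
  have h₃ : x 2 + x 4 + 2 * (x 3 + x 1) ≤ 0 := hf 2
  funext j
  apply le_antisymm _ (hx j)
  fin_cases j <;> simp only [Fin.zero_eta, Fin.mk_one, Fin.reduceFinMk] <;>
    linarith [hx 0, hx 1, hx 2, hx 3, hx 4, hx 5]

/-- `P = P₁ ∪ P₂ ∪ P₃`. -/
theorem polyP_eq_union_pieces : polyP = P1 ∪ P2 ∪ P3 := by
  have hP := polyP_eq_positive_inter_alphaForm_le_one
  refine subset_antisymm (fun x hx => ?_) ?_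
  · obtain ⟨i, hi⟩ := (ConvexCone.positive ℝ _).exists_mem_convexHull_zero_union_inter_eq_one
      alphaForm (fun _ => eq_zero_of_nonneg_of_alphaForm_nonpos) (hP ▸ hx)
    rw [← hP] at hi
    fin_cases i
    exacts [Or.inl (Or.inl hi), Or.inl (Or.inr hi), Or.inr hi]
  · have hconv : Convex ℝ polyP := hP ▸ (ConvexCone.convex _).inter
      (convex_iInter fun i => convex_halfSpace_le (alphaForm i).isLinear 1)
    have h (t) := convexHull_zero_union_inter_subset (t := t) hconv (by simp [polyP])
    exact Set.union_subset (Set.union_subset (h _) (h _)) (h _)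
end

section
/- The piece P₁ admits the half-space description P₁ = P ∩ {x₁₂ − 2x₂₃ + x₃₁ ≥ x₁₃ + x₃₂ − 2x₂₁} ∩ {x₁₂ + x₂₃ − 2x₃₁ ≤ x₁₃ − 2x₃₂ + x₂₁}; that is, P₁ is bounded precisely by the hyperplanes x_ij = 0, α₁, θ₁ and θ₂. -/
/-!
`P ∩ α₁` is the slice at level `α₁ = 1` of the polyhedral cone `C = {x ≥ 0, α₂ ≤ α₁, α₃ ≤ α₁}`,
where `α₂, α₃` are the other two facet forms of `P`, and `α₁ > 0` on `C ∖ {0}`. The pyramid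
over such a slice with apex `O` is the truncation `C ∩ {α₁ ≤ 1}`: a point with `0 < α₁ x ≤ 1`
lies on the segment from `O` to `x / α₁ x`. On the other hand `P ∩ θ₁⁺ ∩ θ₂⁻` is the same
truncation: the `θ` inequalities read `α₃ ≤ α₁` and `α₂ ≤ α₁`, which together with `α₁ ≤ 1`
give the remaining inequalities `α₂, α₃ ≤ 1` of `P`.
-/

theorem convexHull_zero_union_inter_level_eq {E : Type*} [AddCommGroup E] [Module ℝ E]
    (C : PointedCone ℝ E) (f : E →ₗ[ℝ] ℝ) (hf : ∀ x ∈ C, x ≠ 0 → 0 < f x) :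
    convexHull ℝ ({0} ∪ ((C : Set E) ∩ {x | f x = 1})) = (C : Set E) ∩ {x | f x ≤ 1} := by
  apply subset_antisymm
  · refine convexHull_min ?_ (C.convex.inter (convex_halfSpace_le f.isLinear 1))
    rintro x (rfl | ⟨hxC, hx1⟩)
    · exact ⟨C.zero_mem, by simp⟩
    · exact ⟨hxC, le_of_eq hx1⟩
  · rintro x ⟨hxC, hx1 : f x ≤ 1⟩
    obtain rfl | hx0 := eq_or_ne x 0
    · exact subset_convexHull ℝ _ (Or.inl rfl)
    have ht := hf x hxC hx0
    have hy : (f x)⁻¹ • x ∈ (C : Set E) ∩ {x | f x = 1} :=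
      ⟨C.smul_mem (inv_nonneg.2 ht.le) hxC, by simp [ht.ne']⟩
    have hxy : x ∈ segment ℝ 0 ((f x)⁻¹ • x) :=
      ⟨1 - f x, f x, by linarith, ht.le, by ring, by simp [smul_inv_smul₀ ht.ne']⟩
    exact segment_subset_convexHull (Set.mem_union_left _ (Set.mem_singleton 0))
      (Set.mem_union_right _ hy) hxy

def alpha1Form : (Fin 6 → ℝ) →ₗ[ℝ] ℝ where
  toFun x := x 0 + x 3 + 2 * (x 5 + x 2)
  map_add' x y := by simp only [Pi.add_apply]; ring
  map_smul' c x := by simp only [Pi.smul_apply, smul_eq_mul, RingHom.id_apply]; ring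

@[simp]
lemma alpha1Form_apply (x : Fin 6 → ℝ) : alpha1Form x = x 0 + x 3 + 2 * (x 5 + x 2) := rfl

-- The cone `C` of the header, with `α₂ = x₂₁+x₂₃+2(x₁₂+x₃₂)` and `α₃ = x₃₁+x₃₂+2(x₁₃+x₂₃)`.
def coneP1 : PointedCone ℝ (Fin 6 → ℝ) where
  carrier := {x | (∀ i, 0 ≤ x i) ∧ x 5 + x 1 + 2 * (x 0 + x 4) ≤ alpha1Form x ∧
    x 2 + x 4 + 2 * (x 3 + x 1) ≤ alpha1Form x}
  add_mem' := by
    rintro x y ⟨hx, hx2, hx3⟩ ⟨hy, hy2, hy3⟩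
    refine ⟨fun i => add_nonneg (hx i) (hy i), ?_, ?_⟩ <;>
      simp only [map_add, Pi.add_apply, alpha1Form_apply] at * <;> linarith
  zero_mem' := by simp only [Set.mem_ofPred_eq, Pi.zero_apply, map_zero]; norm_num
  smul_mem' := by
    rintro ⟨c, hc : 0 ≤ c⟩ x ⟨hx, hx2, hx3⟩
    refine ⟨fun i => mul_nonneg hc (hx i), ?_, ?_⟩ <;>
      simp only [Nonneg.mk_smul, Pi.smul_apply, smul_eq_mul, alpha1Form_apply] at * <;> nlinarith

lemma mem_coneP1 {x : Fin 6 → ℝ} :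
    x ∈ coneP1 ↔ (∀ i, 0 ≤ x i) ∧ x 5 + x 1 + 2 * (x 0 + x 4) ≤ alpha1Form x ∧
      x 2 + x 4 + 2 * (x 3 + x 1) ≤ alpha1Form x :=
  Iff.rfl

-- The three facet forms `α₁, α₂, α₃` of `P` add up to `3 ∑ i, x i`.
lemma sum_le_alpha1Form_of_mem_coneP1 {x : Fin 6 → ℝ} (hx : x ∈ coneP1) :
    ∑ i, x i ≤ alpha1Form x := by
  obtain ⟨-, h2, h3⟩ := mem_coneP1.1 hx
  rw [Fin.sum_univ_six]
  simp only [alpha1Form_apply] at h2 h3 ⊢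
  linarith

lemma alpha1Form_pos_of_mem_coneP1 : ∀ x ∈ coneP1, x ≠ 0 → 0 < alpha1Form x := by
  intro x hx hx0
  have hnn := (mem_coneP1.1 hx).1
  obtain ⟨i, hi⟩ := Function.ne_iff.1 hx0
  have hsum : 0 < ∑ i, x i :=
    Finset.sum_pos' (fun j _ => hnn j) ⟨i, Finset.mem_univ i, (hnn i).lt_of_ne' hi⟩
  exact hsum.trans_le (sum_le_alpha1Form_of_mem_coneP1 hx)

lemma polyP_inter_alpha1_eq :
    polyP ∩ alpha1 = (coneP1 : Set (Fin 6 → ℝ)) ∩ {x | alpha1Form x = 1} := by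
  ext x
  simp only [polyP, alpha1, Set.mem_inter_iff, Set.mem_ofPred_eq, SetLike.mem_coe, mem_coneP1,
    alpha1Form_apply]
  constructor
  · rintro ⟨⟨-, h2, h3, hnn⟩, ha⟩
    exact ⟨⟨hnn, by linarith, by linarith⟩, ha⟩
  · rintro ⟨⟨hnn, h2, h3⟩, ha⟩
    exact ⟨⟨ha.le, by linarith, by linarith, hnn⟩, ha⟩

lemma polyP_inter_theta_eq :
    polyP ∩ {x | x 3 + x 4 - 2 * x 5 ≤ x 0 - 2 * x 1 + x 2} ∩
      {x | x 0 + x 1 - 2 * x 2 ≤ x 3 - 2 * x 4 + x 5} =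
      (coneP1 : Set (Fin 6 → ℝ)) ∩ {x | alpha1Form x ≤ 1} := by
  ext x
  simp only [polyP, Set.mem_inter_iff, Set.mem_ofPred_eq, SetLike.mem_coe, mem_coneP1,
    alpha1Form_apply]
  constructor
  · rintro ⟨⟨⟨h1, -, -, hnn⟩, hθ₁⟩, hθ₂⟩
    exact ⟨⟨hnn, by linarith, by linarith⟩, h1⟩
  · rintro ⟨⟨hnn, h2, h3⟩, ha⟩
    exact ⟨⟨⟨ha, by linarith, by linarith, hnn⟩, by linarith⟩, by linarith⟩

/-- `P₁ = P ∩ {x₁₂ − 2x₂₃ + x₃₁ ≥ x₁₃ + x₃₂ − 2x₂₁} ∩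
{x₁₂ + x₂₃ − 2x₃₁ ≤ x₁₃ − 2x₃₂ + x₂₁}`: the piece `P₁` is bounded precisely
by the hyperplanes `x_ij = 0`, `α₁`, `θ₁` and `θ₂`. -/
theorem P1_halfspace_description :
    P1 = polyP ∩ {x | x 3 + x 4 - 2 * x 5 ≤ x 0 - 2 * x 1 + x 2} ∩
      {x | x 0 + x 1 - 2 * x 2 ≤ x 3 - 2 * x 4 + x 5} := by
  rw [P1, polyP_inter_alpha1_eq, polyP_inter_theta_eq]
  exact convexHull_zero_union_inter_level_eq coneP1 alpha1Form alpha1Form_pos_of_mem_coneP1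
end

section
/- P₁¹ is the union of the six 6-simplices Δ₁, …, Δ₆ with the following vertex sets (using O=(0,0,0,0,0,0), P₃₁=(0,0,1/2,0,0,0), Q₃₂³¹=(0,0,1/2,0,1/2,0), Q₂₃²¹=(0,1/2,0,0,0,1/2), Q₁₂¹³=(1/2,0,0,1/2,0,0), T₃₁¹³=(0,0,1/3,1/3,0,0), T₂₁¹²=(1/3,0,0,0,0,1/3), R₁=(1/3,1/3,1/3,0,0,0), K₂₁³¹=(0,0,1/4,0,0,1/4), V₁₂³¹=(1/2,0,1/4,0,0,0), V₃₁²³=(0,1/4,1/2,0,0,0)): Δ₁ = conv{O, P₃₁, Q₃₂³¹, Q₂₃²¹, T₃₁¹³, T₂₁¹², K₂₁³¹}; Δ₂ = conv{O, P₃₁, Q₃₂³¹, Q₂₃²¹, T₃₁¹³, T₂₁¹², Q₁₂¹³}; Δ₃ = conv{O, P₃₁, Q₃₂³¹, Q₂₃²¹, R₁, T₂₁¹², Q₁₂¹³}; Δ₄ = conv{O, P₃₁, Q₃₂³¹, Q₂₃²¹, T₃₁¹³, R₁, Q₁₂¹³}; Δ₅ = conv{O, P₃₁, Q₃₂³¹,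 V₁₂³¹, R₁, T₂₁¹², Q₁₂¹³}; Δ₆ = conv{O, P₃₁, Q₃₂³¹, Q₂₃²¹, T₃₁¹³, R₁, V₃₁²³}. Moreover, for i ≠ j the intersection Δ_i ∩ Δ_j has six-dimensional Lebesgue measure zero. -/
/-!
Write `ℓ₁, ℓ₂, ℓ₃` for the left-hand sides of the three inequalities defining `P`. Since `P₁` is
the cone from `O` over the facet `P ∩ α₁`, it satisfies `x ≥ 0`, `ℓ₁ ≤ 1`, `ℓ₂ ≤ ℓ₁`, `ℓ₃ ≤ ℓ₁`.
The six hyperplanes `x₁₂ + x₂₃ = x₂₁`, `x₁₂ + x₂₁ = x₂₃`, `x₂₃ + x₁₃ + x₂₁ = x₁₂`,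
`x₁₂ + x₂₃ = x₁₃ + x₂₁`, `x₂₃ = x₂₁` and `x₂₃ + x₁₃ = x₁₂ + x₂₁` cut `P₁¹` into six chambers,
and on each chamber the barycentric coordinates with respect to the corresponding `Δₖ` are
nonnegative by these inequalities. Conversely, every vertex other than `O` lies in `P ∩ α₁` and
in the half-space defining `P₁¹`. Finally, any two of the simplices lie on opposite sides of one
of the six hyperplanes, so they meet inside it, and a hyperplane is Lebesgue-null.
-/

open MeasureTheory

noncomputable section

/-- `P₁¹ = P₁ ∩ {x₁₂+x₂₃+x₃₁ ≥ x₁₃+x₃₂+x₂₁}`. -/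
noncomputable def P11 : Set (Fin 6 → ℝ) :=
  P1 ∩ {x | x 3 + x 4 + x 5 ≤ x 0 + x 1 + x 2}

def vO : Fin 6 → ℝ := ![0, 0, 0, 0, 0, 0]
def vP31 : Fin 6 → ℝ := ![0, 0, 1/2, 0, 0, 0]
def vQ3231 : Fin 6 → ℝ := ![0, 0, 1/2, 0, 1/2, 0]
def vQ2321 : Fin 6 → ℝ := ![0, 1/2, 0, 0, 0, 1/2]
def vQ1213 : Fin 6 → ℝ := ![1/2, 0, 0, 1/2, 0, 0]
def vT3113 : Fin 6 → ℝ := ![0, 0, 1/3, 1/3, 0, 0]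
def vT2112 : Fin 6 → ℝ := ![1/3, 0, 0, 0, 0, 1/3]
def vR1 : Fin 6 → ℝ := ![1/3, 1/3, 1/3, 0, 0, 0]
def vK2131 : Fin 6 → ℝ := ![0, 0, 1/4, 0, 0, 1/4]
def vV1231 : Fin 6 → ℝ := ![1/2, 0, 1/4, 0, 0, 0]
def vV3123 : Fin 6 → ℝ := ![0, 1/4, 1/2, 0, 0, 0]

/-- The six simplices `Δ₁, …, Δ₆` of the triangulation of `P₁¹`. -/
noncomputable def Delta1 : Set (Fin 6 → ℝ) :=
  convexHull ℝ {vO, vP31, vQ3231, vQ2321, vT3113, vT2112, vK2131}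
noncomputable def Delta2 : Set (Fin 6 → ℝ) :=
  convexHull ℝ {vO, vP31, vQ3231, vQ2321, vT3113, vT2112, vQ1213}
noncomputable def Delta3 : Set (Fin 6 → ℝ) :=
  convexHull ℝ {vO, vP31, vQ3231, vQ2321, vR1, vT2112, vQ1213}
noncomputable def Delta4 : Set (Fin 6 → ℝ) :=
  convexHull ℝ {vO, vP31, vQ3231, vQ2321, vT3113, vR1, vQ1213}
noncomputable def Delta5 : Set (Fin 6 → ℝ) :=
  convexHull ℝ {vO, vP31, vQ3231, vV1231, vR1, vT2112, vQ1213}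
noncomputable def Delta6 : Set (Fin 6 → ℝ) :=
  convexHull ℝ {vO, vP31, vQ3231, vQ2321, vT3113, vR1, vV3123}

/-- The six simplices listed as a family. -/
noncomputable def Deltas : Fin 6 → Set (Fin 6 → ℝ) :=
  ![Delta1, Delta2, Delta3, Delta4, Delta5, Delta6]

theorem addHaar_convexHull_inter_eq_zero_of_separated {E : Type*} [NormedAddCommGroup E]
    [NormedSpace ℝ E] [MeasurableSpace E] [BorelSpace E] [FiniteDimensional ℝ E]
    (μ : Measure E) [μ.IsAddHaarMeasure] {f : Module.Dual ℝ E} (hf : f ≠ 0) {S T : Set E}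
    (hS : ∀ v ∈ S, f v ≤ 0) (hT : ∀ v ∈ T, 0 ≤ f v) :
    μ (convexHull ℝ S ∩ convexHull ℝ T) = 0 := by
  have hS' := (convex_halfSpace_le f.isLinear 0).convexHull_subset_iff.2 hS
  have hT' := (convex_halfSpace_ge f.isLinear 0).convexHull_subset_iff.2 hT
  refine measure_mono_null (fun x hx => ?_)
    (Measure.addHaar_submodule μ (LinearMap.ker f) (by rwa [ne_eq, LinearMap.ker_eq_top]))
  exact le_antisymm (hS' hx.1) (hT' hx.2)

theorem P1_subset : P1 ⊆ {x | (∀ i, 0 ≤ x i) ∧ x 0 + x 3 + 2 * (x 5 + x 2) ≤ 1 ∧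
    x 5 + x 1 + 2 * (x 0 + x 4) ≤ x 0 + x 3 + 2 * (x 5 + x 2) ∧
    x 2 + x 4 + 2 * (x 3 + x 1) ≤ x 0 + x 3 + 2 * (x 5 + x 2)} := by
  refine convexHull_min ?_ ?_
  · rintro z (rfl | ⟨⟨-, h2, h3, hnn⟩, h1 : _ = 1⟩)
    · simp
    · exact ⟨hnn, h1.le, h1 ▸ h2, h1 ▸ h3⟩
  · rintro u ⟨hu0, hu1, hu2, hu3⟩ v ⟨hv0, hv1, hv2, hv3⟩ a b ha hb hab
    simp only [Set.mem_ofPred_eq, Pi.add_apply, Pi.smul_apply, smul_eq_mul]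
    refine ⟨fun i => by have := hu0 i; have := hv0 i; positivity, ?_, ?_, ?_⟩
    · linarith [mul_le_mul_of_nonneg_left hu1 ha, mul_le_mul_of_nonneg_left hv1 hb]
    · linarith [mul_le_mul_of_nonneg_left hu2 ha, mul_le_mul_of_nonneg_left hv2 hb]
    · linarith [mul_le_mul_of_nonneg_left hu3 ha, mul_le_mul_of_nonneg_left hv3 hb]

theorem convex_P11_halfSpace :
    Convex ℝ {x : Fin 6 → ℝ | x 3 + x 4 + x 5 ≤ x 0 + x 1 + x 2} := by
  intro u hu v hv a b ha hb _
  simp only [Set.mem_ofPred_eq, Pi.add_apply, Pi.smul_apply, smul_eq_mul] at hu hv ⊢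
  linarith [mul_le_mul_of_nonneg_left hu ha, mul_le_mul_of_nonneg_left hv hb]

theorem convexHull_subset_P11 {s : Set (Fin 6 → ℝ)} (hs : s ⊆ {0} ∪ polyP ∩ alpha1)
    (hs' : s ⊆ {x | x 3 + x 4 + x 5 ≤ x 0 + x 1 + x 2}) : convexHull ℝ s ⊆ P11 :=
  Set.subset_inter (convexHull_mono hs) (convex_P11_halfSpace.convexHull_subset_iff.2 hs')

theorem union_subset_P11 : Delta1 ∪ Delta2 ∪ Delta3 ∪ Delta4 ∪ Delta5 ∪ Delta6 ⊆ P11 := by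
  simp only [Set.union_subset_iff]
  refine ⟨⟨⟨⟨⟨?_, ?_⟩, ?_⟩, ?_⟩, ?_⟩, ?_⟩ <;>
    refine convexHull_subset_P11 ?_ ?_ <;>
    simp [Set.insert_subset_iff, polyP, alpha1, Fin.forall_fin_succ,
      vO, vP31, vQ3231, vQ2321, vQ1213, vT3113, vT2112, vR1, vK2131, vV1231, vV3123] <;> norm_num

theorem mem_Delta1 {x : Fin 6 → ℝ} (hx : x ∈ P1) (h₀ : x 3 + x 4 + x 5 ≤ x 0 + x 1 + x 2)
    (h : x 0 + x 1 ≤ x 5) : x ∈ Delta1 := by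
  obtain ⟨hnn, h1, h2, h3⟩ := P1_subset hx
  refine mem_convexHull_of_exists_fintype
    ![1 - x 0 - x 3 - 2 * (x 2 + x 5), 2 * (x 0 + x 1 + x 2 - x 3 - x 4 - x 5), 2 * x 4, 2 * x 1,
      3 * x 3, 3 * x 0, 4 * (x 5 - x 0 - x 1)]
    ![vO, vP31, vQ3231, vQ2321, vT3113, vT2112, vK2131]
    (fun i => ?_) ?_ (fun i => by fin_cases i <;> simp) ?_
  · fin_cases i <;> simp <;> linarith [hnn 0, hnn 1, hnn 2, hnn 3, hnn 4, hnn 5]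
  · simp [Fin.sum_univ_succ]
    ring
  · ext j
    fin_cases j <;>
      simp [Fin.sum_univ_succ, vO, vP31, vQ3231, vQ2321, vT3113, vT2112, vK2131] <;> ring

theorem mem_Delta2 {x : Fin 6 → ℝ} (hx : x ∈ P1) (h₀ : x 3 + x 4 + x 5 ≤ x 0 + x 1 + x 2)
    (h₁ : x 1 ≤ x 5) (h₂ : x 5 ≤ x 0 + x 1) (h₃ : x 0 + x 1 ≤ x 3 + x 5) : x ∈ Delta2 := by
  obtain ⟨hnn, h1, h2, h3⟩ := P1_subset hx
  refine mem_convexHull_of_exists_fintype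
    ![1 - x 0 - x 3 - 2 * (x 2 + x 5), 2 * (x 0 + x 1 + x 2 - x 3 - x 4 - x 5), 2 * x 4, 2 * x 1,
      3 * (x 3 + x 5 - x 0 - x 1), 3 * (x 5 - x 1), 2 * (x 0 + x 1 - x 5)]
    ![vO, vP31, vQ3231, vQ2321, vT3113, vT2112, vQ1213]
    (fun i => ?_) ?_ (fun i => by fin_cases i <;> simp) ?_
  · fin_cases i <;> simp <;> linarith [hnn 0, hnn 1, hnn 2, hnn 3, hnn 4, hnn 5]
  · simp [Fin.sum_univ_succ]
    ring
  · ext j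
    fin_cases j <;>
      simp [Fin.sum_univ_succ, vO, vP31, vQ3231, vQ2321, vT3113, vT2112, vQ1213] <;> ring

theorem mem_Delta3 {x : Fin 6 → ℝ} (hx : x ∈ P1) (h₁ : x 0 ≤ x 1 + x 3 + x 5)
    (h₂ : x 3 + x 5 ≤ x 0 + x 1) (h₃ : x 1 + x 3 ≤ x 0 + x 5) : x ∈ Delta3 := by
  obtain ⟨hnn, h1, h2, h3⟩ := P1_subset hx
  refine mem_convexHull_of_exists_fintype
    ![1 - x 0 - x 3 - 2 * (x 2 + x 5), 2 * (x 2 - x 4) + x 3 + x 5 - x 0 - x 1, 2 * x 4,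
      x 1 + x 3 + x 5 - x 0, 3 / 2 * (x 0 + x 1 - x 3 - x 5), 3 / 2 * (x 0 + x 5 - x 1 - x 3),
      2 * x 3]
    ![vO, vP31, vQ3231, vQ2321, vR1, vT2112, vQ1213]
    (fun i => ?_) ?_ (fun i => by fin_cases i <;> simp) ?_
  · fin_cases i <;> simp <;> linarith [hnn 0, hnn 1, hnn 2, hnn 3, hnn 4, hnn 5]
  · simp [Fin.sum_univ_succ]
    ring
  · ext j
    fin_cases j <;>
      simp [Fin.sum_univ_succ, vO, vP31, vQ3231, vQ2321, vR1, vT2112, vQ1213] <;> ring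

theorem mem_Delta4 {x : Fin 6 → ℝ} (hx : x ∈ P1) (h₁ : x 5 ≤ x 1) (h₂ : x 1 ≤ x 0 + x 5)
    (h₃ : x 0 + x 5 ≤ x 1 + x 3) : x ∈ Delta4 := by
  obtain ⟨hnn, h1, h2, h3⟩ := P1_subset hx
  refine mem_convexHull_of_exists_fintype
    ![1 - x 0 - x 3 - 2 * (x 2 + x 5), 2 * (x 0 + x 2 - x 3 - x 4) - 4 * (x 1 - x 5), 2 * x 4,
      2 * x 5, 3 * (x 1 + x 3 - x 0 - x 5), 3 * (x 1 - x 5), 2 * (x 0 + x 5 - x 1)]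
    ![vO, vP31, vQ3231, vQ2321, vT3113, vR1, vQ1213]
    (fun i => ?_) ?_ (fun i => by fin_cases i <;> simp) ?_
  · fin_cases i <;> simp <;> linarith [hnn 0, hnn 1, hnn 2, hnn 3, hnn 4, hnn 5]
  · simp [Fin.sum_univ_succ]
    ring
  · ext j
    fin_cases j <;>
      simp [Fin.sum_univ_succ, vO, vP31, vQ3231, vQ2321, vT3113, vR1, vQ1213] <;> ring

theorem mem_Delta5 {x : Fin 6 → ℝ} (hx : x ∈ P1) (h : x 1 + x 3 + x 5 ≤ x 0) : x ∈ Delta5 := by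
  obtain ⟨hnn, h1, h2, h3⟩ := P1_subset hx
  refine mem_convexHull_of_exists_fintype
    ![1 - x 0 - x 3 - 2 * (x 2 + x 5), 2 * (x 2 - x 4) + x 3 + x 5 - x 0 - x 1, 2 * x 4,
      2 * (x 0 - x 1 - x 3 - x 5), 3 * x 1, 3 * x 5, 2 * x 3]
    ![vO, vP31, vQ3231, vV1231, vR1, vT2112, vQ1213]
    (fun i => ?_) ?_ (fun i => by fin_cases i <;> simp) ?_
  · fin_cases i <;> simp <;> linarith [hnn 0, hnn 1, hnn 2, hnn 3, hnn 4, hnn 5]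
  · simp [Fin.sum_univ_succ]
    ring
  · ext j
    fin_cases j <;>
      simp [Fin.sum_univ_succ, vO, vP31, vQ3231, vV1231, vR1, vT2112, vQ1213] <;> ring

theorem mem_Delta6 {x : Fin 6 → ℝ} (hx : x ∈ P1) (h : x 0 + x 5 ≤ x 1) : x ∈ Delta6 := by
  obtain ⟨hnn, h1, h2, h3⟩ := P1_subset hx
  refine mem_convexHull_of_exists_fintype
    ![1 - x 0 - x 3 - 2 * (x 2 + x 5), 2 * (x 0 + x 2 - x 3 - x 4) - 4 * (x 1 - x 5), 2 * x 4,
      2 * x 5, 3 * x 3, 3 * x 0, 4 * (x 1 - x 0 - x 5)]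
    ![vO, vP31, vQ3231, vQ2321, vT3113, vR1, vV3123]
    (fun i => ?_) ?_ (fun i => by fin_cases i <;> simp) ?_
  · fin_cases i <;> simp <;> linarith [hnn 0, hnn 1, hnn 2, hnn 3, hnn 4, hnn 5]
  · simp [Fin.sum_univ_succ]
    ring
  · ext j
    fin_cases j <;>
      simp [Fin.sum_univ_succ, vO, vP31, vQ3231, vQ2321, vT3113, vR1, vV3123] <;> ring

theorem P11_subset_union : P11 ⊆ Delta1 ∪ Delta2 ∪ Delta3 ∪ Delta4 ∪ Delta5 ∪ Delta6 := by
  rintro x ⟨hx, h₀ : x 3 + x 4 + x 5 ≤ x 0 + x 1 + x 2⟩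
  simp only [Set.mem_union]
  rcases le_total (x 1 + x 3 + x 5) (x 0) with h5 | h5
  · have := mem_Delta5 hx h5; tauto
  rcases le_total (x 0 + x 1) (x 5) with h1 | h1
  · have := mem_Delta1 hx h₀ h1; tauto
  rcases le_total (x 0 + x 5) (x 1) with h6 | h6
  · have := mem_Delta6 hx h6; tauto
  rcases le_total (x 0 + x 1) (x 3 + x 5) with h23 | h23
  · rcases le_total (x 1) (x 5) with h24 | h24
    · have := mem_Delta2 hx h₀ h24 h1 h23; tauto
    · have := mem_Delta4 hx h24 h6 (by linarith); tauto
  · rcases le_total (x 1 + x 3) (x 0 + x 5) with h34 | h34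
    · have := mem_Delta3 hx h5 h23 h34; tauto
    · have := mem_Delta4 hx (by linarith) h6 h34; tauto

-- For `i < j`, the simplices `Deltas i` and `Deltas j` (that is, `Δᵢ₊₁` and `Δⱼ₊₁`) lie on the
-- nonpositive and nonnegative side of `{x | separator i j ⬝ᵥ x = 0}`, one of the six hyperplanes
-- of the case split in `P11_subset_union`.
def separator (i j : Fin 6) : Fin 6 → ℝ :=
  if i = 0 then ![1, 1, 0, 0, 0, -1]
  else if j = 5 then ![-1, 1, 0, 0, 0, -1]
  else if j = 4 then ![1, -1, 0, -1, 0, -1]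
  else if i = 2 then ![-1, 1, 0, 1, 0, -1]
  else if j = 2 then ![1, 1, 0, -1, 0, -1]
  else ![0, 1, 0, 0, 0, -1]

theorem volume_Deltas_inter_eq_zero_of_lt {i j : Fin 6} (hij : i < j) :
    volume (Deltas i ∩ Deltas j) = 0 := by
  generalize hc : separator i j = c
  fin_cases i <;> fin_cases j <;> norm_num at hij <;>
    refine addHaar_convexHull_inter_eq_zero_of_separated volume
      (f := dotProductEquiv ℝ (Fin 6) c) ?_ ?_ ?_ <;>
    simp [← hc, separator, dotProduct, Fin.sum_univ_succ,
      vO, vP31, vQ3231, vQ2321, vQ1213, vT3113, vT2112, vR1, vK2131, vV1231, vV3123]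

/-- `P₁¹` is the union of the six simplices `Δ₁, …, Δ₆`, and distinct
simplices intersect in a set of measure zero. -/
theorem P11_triangulation :
    P11 = Delta1 ∪ Delta2 ∪ Delta3 ∪ Delta4 ∪ Delta5 ∪ Delta6 ∧
    ∀ i j : Fin 6, i ≠ j → volume (Deltas i ∩ Deltas j) = 0 := by
  refine ⟨P11_subset_union.antisymm union_subset_P11, fun i j hij => ?_⟩
  rcases hij.lt_or_gt with h | h
  · exact volume_Deltas_inter_eq_zero_of_lt h
  · rw [Set.inter_comm]
    exact volume_Deltas_inter_eq_zero_of_lt h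

end
end
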